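/- Define Q_μ^q = (1−q)Q_μ + q(1−Q_μ) for q ∈ [0, 1/2] and Q_μ ∈ [0, 1/2]. Then h(Q_μ^q) − h(q) is nonnegative and nonincreasing in q on [0, 1/2], and equals h(Q_μ) at q = 0 and 0 at q = 1/2, where h is the binary entropy. -/

import Mathlib

/-- Binary entropy (in bits). -/
noncomputable def binEnt (x : ℝ) : ℝ := -(x * Real.logb 2 x) - (1 - x) * Real.logb 2 (1 - x)

lemma binEnt_eq (x : ℝ) : binEnt x = Real.binEntropy x / Real.log 2 := by
  simp only [binEnt, Real.binEntropy, Real.logb, Real.log_inv]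
  ring

lemma binEnt_continuous : Continuous binEnt := by
  have : binEnt = fun x => Real.binEntropy x / Real.log 2 := funext binEnt_eq
  rw [this]
  exact Real.binEntropy_continuous.div_const _

lemma hasDerivAt_binEnt {p : ℝ} (h0 : p ≠ 0) (h1 : p ≠ 1) :
    HasDerivAt binEnt ((Real.log (1 - p) - Real.log p) / Real.log 2) p := by
  have : binEnt = fun x => Real.binEntropy x / Real.log 2 := funext binEnt_eq
  rw [this]
  exact (Real.hasDerivAt_binEntropy h0 h1).div_const _

/-- With `Q_μ^q = (1−q)Q_μ + q(1−Q_μ)` for `q ∈ [0, 1/2]`, `Q_μ ∈ [0, 1/2]`, the penalty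
`h(Q_μ^q) − h(q)` is nonnegative and nonincreasing in `q` on `[0, 1/2]`, equals `h(Q_μ)`
at `q = 0`, and equals `0` at `q = 1/2`. -/
theorem local_randomization_penalty (Qmu : ℝ) (hQ0 : 0 ≤ Qmu) (hQ : Qmu ≤ 1 / 2) :
    (∀ q ∈ Set.Icc (0 : ℝ) (1 / 2),
        0 ≤ binEnt ((1 - q) * Qmu + q * (1 - Qmu)) - binEnt q) ∧
    AntitoneOn (fun q => binEnt ((1 - q) * Qmu + q * (1 - Qmu)) - binEnt q)
      (Set.Icc (0 : ℝ) (1 / 2)) ∧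
    binEnt ((1 - 0) * Qmu + 0 * (1 - Qmu)) - binEnt 0 = binEnt Qmu ∧
    binEnt ((1 - 1 / 2) * Qmu + (1 / 2) * (1 - Qmu)) - binEnt (1 / 2) = 0 := by
  set f : ℝ → ℝ := fun q => binEnt ((1 - q) * Qmu + q * (1 - Qmu)) - binEnt q with hf
  have hlog2 : (0 : ℝ) < Real.log 2 := Real.log_pos (by norm_num)
  -- value at 1/2
  have ehalf : f (1 / 2) = 0 := by
    show binEnt ((1 - 1 / 2) * Qmu + 1 / 2 * (1 - Qmu)) - binEnt (1 / 2) = 0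
    rw [show (1 - 1 / 2 : ℝ) * Qmu + 1 / 2 * (1 - Qmu) = 1 / 2 by ring, sub_self]
  -- value at 0
  have e0 : f 0 = binEnt Qmu := by
    have h1 : (1 - 0 : ℝ) * Qmu + 0 * (1 - Qmu) = Qmu := by ring
    have h2 : binEnt 0 = 0 := by simp [binEnt]
    simp [hf, h1, h2]
  -- derivative computation on the interior
  have hderiv : ∀ q ∈ Set.Ioo (0 : ℝ) (1 / 2),
      HasDerivAt f
        ((Real.log (1 - ((1 - q) * Qmu + q * (1 - Qmu))) -
            Real.log ((1 - q) * Qmu + q * (1 - Qmu))) / Real.log 2 * (1 - 2 * Qmu)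
          - (Real.log (1 - q) - Real.log q) / Real.log 2) q := by
    intro q hq
    obtain ⟨hq0, hq1⟩ := hq
    set m : ℝ := (1 - q) * Qmu + q * (1 - Qmu) with hm
    have hq' : q < 1 := by linarith
    have hQ2 : 0 ≤ 1 - 2 * Qmu := by linarith
    have hmq : q ≤ m := by nlinarith
    have hm0 : 0 < m := lt_of_lt_of_le hq0 hmq
    have hm1 : m ≤ 1 / 2 := by nlinarith
    have hinner : HasDerivAt (fun q : ℝ => (1 - q) * Qmu + q * (1 - Qmu)) (1 - 2 * Qmu) q := by
      have h1 : HasDerivAt (fun q : ℝ => (1 - q) * Qmu) (-1 * Qmu) q :=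
        (((hasDerivAt_id q).const_sub 1)).mul_const Qmu
      have h2 : HasDerivAt (fun q : ℝ => q * (1 - Qmu)) (1 * (1 - Qmu)) q :=
        (hasDerivAt_id q).mul_const (1 - Qmu)
      have := h1.add h2
      rw [show (1 - 2 * Qmu) = -1 * Qmu + 1 * (1 - Qmu) by ring]
      exact this
    have houter : HasDerivAt binEnt ((Real.log (1 - m) - Real.log m) / Real.log 2) m :=
      hasDerivAt_binEnt (ne_of_gt hm0) (by linarith)
    have hcomp := houter.comp q hinner
    have hq' : HasDerivAt binEnt ((Real.log (1 - q) - Real.log q) / Real.log 2) q :=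
      hasDerivAt_binEnt (ne_of_gt hq0) (by linarith)
    exact hcomp.sub hq'
  -- derivative is nonpositive on the interior
  have hdnp : ∀ q ∈ interior (Set.Icc (0 : ℝ) (1 / 2)), deriv f q ≤ 0 := by
    intro q hq
    rw [interior_Icc] at hq
    obtain ⟨hq0, hq1⟩ := hq
    rw [(hderiv q ⟨hq0, hq1⟩).deriv]
    set m : ℝ := (1 - q) * Qmu + q * (1 - Qmu) with hm
    have hQ2 : 0 ≤ 1 - 2 * Qmu := by linarith
    have hQ2' : 1 - 2 * Qmu ≤ 1 := by linarith
    have hmq : q ≤ m := by nlinarith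
    have hm0 : 0 < m := lt_of_lt_of_le hq0 hmq
    have hm1 : m ≤ 1 / 2 := by nlinarith
    have hA : 0 ≤ Real.log (1 - m) - Real.log m :=
      sub_nonneg.2 (Real.log_le_log hm0 (by linarith))
    have hAB : Real.log (1 - m) - Real.log m ≤ Real.log (1 - q) - Real.log q := by
      have h1 : Real.log (1 - m) ≤ Real.log (1 - q) :=
        Real.log_le_log (by linarith) (by linarith)
      have h2 : Real.log q ≤ Real.log m := Real.log_le_log hq0 hmq
      linarith
    have key : (Real.log (1 - m) - Real.log m) * (1 - 2 * Qmu)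
        ≤ Real.log (1 - q) - Real.log q := by
      calc (Real.log (1 - m) - Real.log m) * (1 - 2 * Qmu)
          ≤ (Real.log (1 - m) - Real.log m) * 1 := by
            exact mul_le_mul_of_nonneg_left hQ2' hA
        _ = Real.log (1 - m) - Real.log m := mul_one _
        _ ≤ _ := hAB
    rw [div_mul_eq_mul_div, div_sub_div_same]
    apply div_nonpos_of_nonpos_of_nonneg _ hlog2.le
    linarith
  -- continuity
  have hcont : Continuous f := by
    apply Continuous.sub
    · exact binEnt_continuous.comp (by continuity)
    · exact binEnt_continuous
  -- antitonicity
  have hanti : AntitoneOn f (Set.Icc (0 : ℝ) (1 / 2)) := by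
    apply antitoneOn_of_deriv_nonpos (convex_Icc _ _) hcont.continuousOn
    · intro q hq
      rw [interior_Icc] at hq
      exact (hderiv q hq).differentiableAt.differentiableWithinAt
    · exact hdnp
  refine ⟨?_, hanti, ?_, ?_⟩
  · intro q hq
    have := hanti hq (Set.right_mem_Icc.2 (by norm_num)) hq.2
    rw [ehalf] at this
    exact this
  · exact e0
  · exact ehalf
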